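/- Let G be a connected finite weighted graph with positive edge weights, and let u and v be two vertices of G satisfying: (1) the shortest u-v path P = (u = v_0, v_1, ..., v_k = v) in G is unique, and (2) for every vertex x of G there is a unique vertex v_i on P with d_G(x, v_i) = d_G(x, V(P)). For 0 ≤ i ≤ k let V_i = {x ∈ V(G) : d_G(x, v_i) = d_G(x, V(P))} and let T_i be any spanning tree of the induced subgraph G[V_i]. Then the subgraph T of G with vertex set V(G) and edge set E(T) = E(P) ∪ E(T_0) ∪ E(T_1) ∪ ... ∪ E(T_k) is a spanning tree of G. -/

import Mathlib

open SimpleGraph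

/-- The weighted length of a walk: the sum of the weights of its edges. -/
def SimpleGraph.Walk.wlength {V : Type*} {G : SimpleGraph V} (w : V → V → ℝ) {x y : V}
    (p : G.Walk x y) : ℝ :=
  (p.darts.map fun d => w d.toProd.1 d.toProd.2).sum

/-- The weighted distance between two vertices: the minimum weighted length of a walk. -/
noncomputable def SimpleGraph.wdist {V : Type*} (G : SimpleGraph V) (w : V → V → ℝ)
    (x y : V) : ℝ :=
  sInf {r : ℝ | ∃ p : G.Walk x y, p.wlength w = r}

/-- The weighted distance from a vertex to a set of vertices. -/
noncomputable def SimpleGraph.wdistS {V : Type*} (G : SimpleGraph V) (w : V → V → ℝ)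
    (x : V) (S : Set V) : ℝ :=
  sInf (G.wdist w x '' S)

/-- `Vset G w P i` is the set of vertices whose nearest vertex on the walk `P` is `P.getVert i`,
i.e. `V_i = {x : d_G(x, v_i) = d_G(x, V(P))}`. -/
def Vset {V : Type*} (G : SimpleGraph V) (w : V → V → ℝ) {u v : V} (P : G.Walk u v)
    (i : ℕ) : Set V :=
  {x : V | G.wdist w x (P.getVert i) = G.wdistS w x {z | z ∈ P.support}}

/-!
By (2) every vertex lies in exactly one `V_i`, and `v_i ∈ V_i` because distances are
nonnegative. Each vertex is joined inside its `T_i` to `v_i`, and the `v_i` are joined along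
`P`, so `T` is connected. The path edge `v_i v_{i+1}` is the only edge of `T` leaving
`V_0 ∪ ⋯ ∪ V_i`, hence a bridge; the remaining edges form the disjoint union of the acyclic
`T_i`, so `T` has no cycle either.
-/

namespace SimpleGraph

variable {V : Type*} {G H U : SimpleGraph V}

lemma Walk.apply_eq_of_forall_adj {α : Type*} {f : V → α} (hf : ∀ x y, G.Adj x y → f x = f y) :
    ∀ {a b : V}, G.Walk a b → f a = f b
  | _, _, .nil => rfl
  | _, _, .cons h p => (hf _ _ h).trans (apply_eq_of_forall_adj hf p)

lemma isBridge_of_forall_crossing_eq {S : Set V} {a b : V} (ha : a ∈ S) (hb : b ∉ S)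
    (hcross : ∀ x y, H.Adj x y → x ∈ S → y ∉ S → s(x, y) = s(a, b)) :
    H.IsBridge s(a, b) := by
  rw [isBridge_iff]
  rintro ⟨p⟩
  obtain ⟨d, -, hdS, hdS'⟩ := p.exists_boundary_dart S ha hb
  have hd := d.adj
  rw [deleteEdges_adj] at hd
  exact hd.2 (hcross _ _ hd.1 hdS hdS')

lemma isAcyclic_of_forall_notMem_isBridge (hU : U.IsAcyclic)
    (hbridge : ∀ e ∈ H.edgeSet, e ∉ U.edgeSet → H.IsBridge e) : H.IsAcyclic := by
  intro x c hc
  by_cases hcU : ∀ e ∈ c.edges, e ∈ U.edgeSet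
  · exact hU _ (hc.transfer hcU)
  · obtain ⟨e, he, heU⟩ := not_forall₂.mp hcU
    exact (hbridge e (c.edges_subset_edgeSet he) heU).notMem_edges_of_isCycle hc he

lemma isAcyclic_biSup_of_adj_fiber {ι : Type*} {s : Set ι} {T : ι → SimpleGraph V} (f : V → ι)
    (hTf : ∀ i ∈ s, ∀ x y, (T i).Adj x y → f x = i ∧ f y = i)
    (hT : ∀ i ∈ s, (T i).IsAcyclic) : (⨆ i ∈ s, T i).IsAcyclic := by
  have hadj : ∀ {x y}, (⨆ i ∈ s, T i).Adj x y → ∃ i ∈ s, f x = i ∧ f y = i ∧ (T i).Adj x y := by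
    intro x y h
    simp only [iSup_adj] at h
    obtain ⟨i, hi, h⟩ := h
    exact ⟨i, hi, (hTf i hi x y h).1, (hTf i hi x y h).2, h⟩
  classical
  intro x c hc
  have hconst : ∀ z ∈ c.support, f x = f z := fun z hz =>
    (c.takeUntil z hz).apply_eq_of_forall_adj fun a b h => by
      obtain ⟨i, -, ha, hb, -⟩ := hadj h
      rw [ha, hb]
  have hedge : ∀ e ∈ c.edges, ∃ i ∈ s, f x = i ∧ e ∈ (T i).edgeSet := by
    rintro ⟨a, b⟩ he
    obtain ⟨i, hi, ha, -, hab⟩ := hadj (c.adj_of_mem_edges he)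
    exact ⟨i, hi, (hconst a (c.fst_mem_support_of_mem_edges he)).trans ha, hab⟩
  obtain ⟨e₀, he₀⟩ := List.exists_mem_of_ne_nil _ (Walk.edges_eq_nil.not.mpr hc.not_nil)
  obtain ⟨i, hi, hfx, -⟩ := hedge e₀ he₀
  subst hfx
  exact hT _ hi _ (hc.transfer fun e he => by obtain ⟨i, -, rfl, he⟩ := hedge e he; exact he)

def gluedGraph {u v : V} (P : G.Walk u v) (T : ℕ → SimpleGraph V) : SimpleGraph V :=
  fromEdgeSet ({e | e ∈ P.edges} ∪ ⋃ i ∈ Set.Iic P.length, (T i).edgeSet)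

section Gluing

variable {u v : V} {P : G.Walk u v} {T : ℕ → SimpleGraph V}

lemma gluedGraph_le (hT : ∀ i ≤ P.length, T i ≤ G) : gluedGraph P T ≤ G := by
  rw [gluedGraph, fromEdgeSet_le]
  rintro e ⟨he | he, -⟩
  · exact P.edges_subset_edgeSet he
  · simp only [Set.mem_iUnion, Set.mem_Iic] at he
    obtain ⟨i, hi, he⟩ := he
    exact edgeSet_mono (hT i hi) he

lemma le_gluedGraph {i : ℕ} (hi : i ≤ P.length) : T i ≤ gluedGraph P T := by
  rw [gluedGraph, le_fromEdgeSet_iff]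
  exact Set.subset_union_of_subset_right
    (Set.subset_biUnion_of_mem (u := fun i => (T i).edgeSet) (Set.mem_Iic.mpr hi)) _

lemma edges_subset_edgeSet_gluedGraph : ∀ e ∈ P.edges, e ∈ (gluedGraph P T).edgeSet := by
  intro e he
  rw [gluedGraph, edgeSet_fromEdgeSet]
  exact ⟨Or.inl he, G.not_isDiag_of_mem_edgeSet (P.edges_subset_edgeSet he)⟩

lemma mem_edges_of_mem_edgeSet_gluedGraph {e : Sym2 V} (he : e ∈ (gluedGraph P T).edgeSet)
    (hT : e ∉ (⨆ i ∈ Set.Iic P.length, T i).edgeSet) : e ∈ P.edges := by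
  rw [gluedGraph, edgeSet_fromEdgeSet] at he
  simp only [edgeSet_iSup] at hT
  exact he.1.resolve_right hT

lemma gluedGraph_connected (hreach : ∀ x, ∃ i ≤ P.length, (T i).Reachable x (P.getVert i)) :
    (gluedGraph P T).Connected := by
  classical
  have hu : ∀ x, (gluedGraph P T).Reachable x u := fun x => by
    obtain ⟨i, hi, hx⟩ := hreach x
    let P' := P.transfer (gluedGraph P T) edges_subset_edgeSet_gluedGraph
    have hiP' : P.getVert i ∈ P'.support := by
      rw [Walk.support_transfer]; exact P.getVert_mem_support i
    exact (hx.mono (le_gluedGraph hi)).trans ⟨(P'.takeUntil _ hiP').reverse⟩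
  exact (connected_iff_exists_forall_reachable _).2 ⟨u, fun x => (hu x).symm⟩

lemma isBridge_gluedGraph_of_mem_edges {f : V → ℕ} (hf : ∀ i ≤ P.length, f (P.getVert i) = i)
    (hTf : ∀ i ≤ P.length, ∀ x y, (T i).Adj x y → f x = i ∧ f y = i)
    {e : Sym2 V} (he : e ∈ P.edges) : (gluedGraph P T).IsBridge e := by
  cases e with | h a b => ?_
  obtain ⟨i, hi, hab⟩ := P.mk_mem_edges_iff_exists.mp he
  rw [← hab]
  refine isBridge_of_forall_crossing_eq (S := {x | f x ≤ i}) (by simp [hf i hi.le])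
    (by simp [hf (i + 1) hi]) fun x y hxy hx hy => ?_
  simp only [Set.mem_ofPred_eq, not_le] at hx hy
  rw [gluedGraph, fromEdgeSet_adj] at hxy
  obtain ⟨hPxy | hTxy, -⟩ := hxy
  · obtain ⟨j, hj, hjxy⟩ := P.mk_mem_edges_iff_exists.mp hPxy
    rw [Sym2.eq_iff] at hjxy
    obtain ⟨rfl, rfl⟩ | ⟨rfl, rfl⟩ := hjxy
    · rw [hf j hj.le] at hx
      rw [hf (j + 1) hj] at hy
      obtain rfl : j = i := by omega
      rfl
    · rw [hf (j + 1) hj] at hx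
      rw [hf j hj.le] at hy
      omega
  · simp only [Set.mem_iUnion, Set.mem_Iic] at hTxy
    obtain ⟨j, hj, hTxy⟩ := hTxy
    obtain ⟨hfx, hfy⟩ := hTf j hj x y hTxy
    omega

lemma gluedGraph_isAcyclic {f : V → ℕ} (hf : ∀ i ≤ P.length, f (P.getVert i) = i)
    (hTf : ∀ i ≤ P.length, ∀ x y, (T i).Adj x y → f x = i ∧ f y = i)
    (hT : ∀ i ≤ P.length, (T i).IsAcyclic) : (gluedGraph P T).IsAcyclic :=
  isAcyclic_of_forall_notMem_isBridge (isAcyclic_biSup_of_adj_fiber f hTf hT) fun _ he heT =>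
    isBridge_gluedGraph_of_mem_edges hf hTf (mem_edges_of_mem_edgeSet_gluedGraph he heT)

lemma gluedGraph_isTree (A : ℕ → Set V) (hA : ∀ x, ∃! i, i ≤ P.length ∧ x ∈ A i)
    (hPA : ∀ i ≤ P.length, P.getVert i ∈ A i)
    (hTA : ∀ i ≤ P.length, ∀ x y, (T i).Adj x y → x ∈ A i ∧ y ∈ A i)
    (hT : ∀ i ≤ P.length, (T i).IsAcyclic)
    (hTconn : ∀ i ≤ P.length, ∀ x ∈ A i, ∀ y ∈ A i, (T i).Reachable x y) :
    (gluedGraph P T).IsTree := by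
  choose f hf hf_unique using hA
  have hfA : ∀ i ≤ P.length, ∀ x ∈ A i, f x = i := fun i hi x hx => (hf_unique x i ⟨hi, hx⟩).symm
  refine ⟨gluedGraph_connected fun x => ⟨f x, (hf x).1, ?_⟩, gluedGraph_isAcyclic (f := f)
    (fun i hi => hfA i hi _ (hPA i hi)) (fun i hi x y h => ?_) hT⟩
  · exact hTconn _ (hf x).1 x (hf x).2 _ (hPA _ (hf x).1)
  · exact ⟨hfA i hi x (hTA i hi x y h).1, hfA i hi y (hTA i hi x y h).2⟩

end Gluing

section Distance

variable {w : V → V → ℝ}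

lemma Walk.wlength_nonneg (hw : ∀ a b, G.Adj a b → 0 ≤ w a b) {x y : V} (p : G.Walk x y) :
    0 ≤ p.wlength w :=
  List.sum_nonneg fun _ hr => by
    obtain ⟨d, -, rfl⟩ := List.mem_map.mp hr
    exact hw _ _ d.adj

lemma wdist_nonneg (hw : ∀ a b, G.Adj a b → 0 ≤ w a b) (x y : V) : 0 ≤ G.wdist w x y :=
  Real.sInf_nonneg fun _ ⟨p, hp⟩ => hp ▸ p.wlength_nonneg hw

lemma wdist_self (hw : ∀ a b, G.Adj a b → 0 ≤ w a b) (x : V) : G.wdist w x x = 0 :=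
  le_antisymm
    (csInf_le ⟨0, fun _ ⟨p, hp⟩ => hp ▸ p.wlength_nonneg hw⟩ ⟨.nil, by simp [Walk.wlength]⟩)
    (wdist_nonneg hw x x)

lemma wdistS_eq_zero_of_mem (hw : ∀ a b, G.Adj a b → 0 ≤ w a b) {S : Set V} {x : V}
    (hx : x ∈ S) : G.wdistS w x S = 0 := by
  have hbdd : ∀ r ∈ G.wdist w x '' S, 0 ≤ r := fun _ ⟨y, _, hy⟩ => hy ▸ wdist_nonneg hw x y
  refine le_antisymm ?_ (Real.sInf_nonneg hbdd)
  calc G.wdistS w x S ≤ G.wdist w x x := csInf_le ⟨0, hbdd⟩ ⟨x, hx, rfl⟩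
    _ = 0 := wdist_self hw x

lemma Walk.getVert_mem_Vset (hw : ∀ a b, G.Adj a b → 0 ≤ w a b) {u v : V} (P : G.Walk u v)
    (i : ℕ) : P.getVert i ∈ Vset G w P i := by
  rw [Vset, Set.mem_ofPred_eq, wdist_self hw, wdistS_eq_zero_of_mem hw (P.getVert_mem_support i)]

lemma Walk.IsPath.existsUnique_mem_Vset {u v : V} {P : G.Walk u v} (hP : P.IsPath)
    (hnear : ∀ x : V, ∃! y : V, y ∈ P.support ∧
      G.wdist w x y = G.wdistS w x {z | z ∈ P.support}) (x : V) :
    ∃! i, i ≤ P.length ∧ x ∈ Vset G w P i := by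
  obtain ⟨_, ⟨hyP, hy⟩, hy_unique⟩ := hnear x
  obtain ⟨i, rfl, hi⟩ := Walk.mem_support_iff_exists_getVert.mp hyP
  refine ⟨i, ⟨hi, hy⟩, ?_⟩
  rintro j ⟨hj, hxj⟩
  exact hP.getVert_injOn hj hi (hy_unique _ ⟨P.getVert_mem_support j, hxj⟩)

end Distance

end SimpleGraph

theorem glued_graph_is_spanning_tree_general {V : Type*} (G : SimpleGraph V)
    (w : V → V → ℝ)
    (hpos : ∀ a b : V, G.Adj a b → 0 < w a b) (u v : V)
    (P : G.Walk u v) (hP : P.IsPath)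
    (hnear : ∀ x : V, ∃! y : V, y ∈ P.support ∧
      G.wdist w x y = G.wdistS w x {z | z ∈ P.support})
    -- `Ti i` is a spanning tree of the induced subgraph `G[V_i]`, viewed as a graph on `V`
    -- whose edges all lie inside `V_i`:
    (Ti : ℕ → SimpleGraph V)
    (hTle : ∀ i : ℕ, i ≤ P.length → Ti i ≤ G)
    (hTin : ∀ i : ℕ, i ≤ P.length → ∀ x y : V, (Ti i).Adj x y →
      x ∈ Vset G w P i ∧ y ∈ Vset G w P i)
    (hTacyc : ∀ i : ℕ, i ≤ P.length → (Ti i).IsAcyclic)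
    (hTconn : ∀ i : ℕ, i ≤ P.length → ∀ x ∈ Vset G w P i, ∀ y ∈ Vset G w P i,
      (Ti i).Reachable x y) :
    SimpleGraph.fromEdgeSet
        ({e : Sym2 V | e ∈ P.edges} ∪ ⋃ i ∈ Set.Iic P.length, (Ti i).edgeSet) ≤ G ∧
      (SimpleGraph.fromEdgeSet
        ({e : Sym2 V | e ∈ P.edges} ∪ ⋃ i ∈ Set.Iic P.length, (Ti i).edgeSet)).IsTree := by
  have hw : ∀ a b, G.Adj a b → 0 ≤ w a b := fun a b h => (hpos a b h).le
  exact ⟨gluedGraph_le hTle,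
    gluedGraph_isTree (Vset G w P) (hP.existsUnique_mem_Vset hnear)
      (fun i _ => P.getVert_mem_Vset hw i) hTin hTacyc hTconn⟩

/-- Under conditions (1) and (2), gluing spanning trees `T_i` of the induced subgraphs
`G[V_i]` onto the unique shortest `u`-`v` path `P` yields a spanning tree of `G`:
the graph with edge set `E(P) ∪ E(T_0) ∪ E(T_1) ∪ ⋯ ∪ E(T_k)` is a spanning tree of `G`. -/
theorem glued_graph_is_spanning_tree {V : Type*} [Fintype V] (G : SimpleGraph V)
    (hG : G.Connected) (w : V → V → ℝ) (hsymm : ∀ a b : V, w a b = w b a)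
    (hpos : ∀ a b : V, G.Adj a b → 0 < w a b) (u v : V)
    (P : G.Walk u v) (hP : P.IsPath) (hPshort : P.wlength w = G.wdist w u v)
    (hPuniq : ∀ Q : G.Walk u v, Q.IsPath → Q.wlength w = G.wdist w u v → Q = P)
    (hnear : ∀ x : V, ∃! y : V, y ∈ P.support ∧
      G.wdist w x y = G.wdistS w x {z | z ∈ P.support})
    -- `Ti i` is a spanning tree of the induced subgraph `G[V_i]`, viewed as a graph on `V`
    -- whose edges all lie inside `V_i`:
    (Ti : ℕ → SimpleGraph V)
    (hTle : ∀ i : ℕ, i ≤ P.length → Ti i ≤ G)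
    (hTin : ∀ i : ℕ, i ≤ P.length → ∀ x y : V, (Ti i).Adj x y →
      x ∈ Vset G w P i ∧ y ∈ Vset G w P i)
    (hTacyc : ∀ i : ℕ, i ≤ P.length → (Ti i).IsAcyclic)
    (hTconn : ∀ i : ℕ, i ≤ P.length → ∀ x ∈ Vset G w P i, ∀ y ∈ Vset G w P i,
      (Ti i).Reachable x y) :
    SimpleGraph.fromEdgeSet
        ({e : Sym2 V | e ∈ P.edges} ∪ ⋃ i ∈ Set.Iic P.length, (Ti i).edgeSet) ≤ G ∧
      (SimpleGraph.fromEdgeSet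
        ({e : Sym2 V | e ∈ P.edges} ∪ ⋃ i ∈ Set.Iic P.length, (Ti i).edgeSet)).IsTree :=
  glued_graph_is_spanning_tree_general G w hpos u v P hP hnear Ti hTle hTin hTacyc hTconn
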